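/- Let Σₙ be a symmetric invertible real n×n matrix, k ∈ ℝ^n, κ², β² ∈ ℝ, γ² := κ² - kᵀ Σₙ⁻¹ k, and assume β² + γ² ≠ 0. Let Σ₊ := [[Σₙ, k],[kᵀ, κ² + β²]] and let k₊ ∈ ℝ^{n+1} have first n entries equal to those of k and last entry κ². For any θₙ ∈ ℝ^n and θ_{n+1} ∈ ℝ, let θ₊ ∈ ℝ^{n+1} be the vector obtained by appending θ_{n+1} to θₙ, and set θ' := kᵀ Σₙ⁻¹ θₙ. Then k₊ᵀ Σ₊⁻¹ θ₊ = (β² · θ' + γ² · θ_{n+1}) / (β² + γ²). -/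

import Mathlib

/-!
The last row of `Σ₊` is `(kᵀ, κ² + β²)`, i.e. `k₊ᵀ` plus `β²` times the last unit covector, so
`k₊ᵀ Σ₊⁻¹ θ₊ = θ_{n+1} - β² t` with `t` the last coordinate of `Σ₊⁻¹ θ₊`. Eliminating the first
block of the system `Σ₊ (y, t) = θ₊` gives `(β² + γ²) t = θ_{n+1} - θ'`.
-/

open Matrix

section Bordered

variable {m K : Type*} [Fintype m] [Field K] {A : Matrix m m K} {u v : m → K} {d : K}

theorem fromBlocks_replicateCol_replicateRow_mulVec_sumElim (y : m → K) (t : K) :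
    fromBlocks A (replicateCol (Fin 1) u) (replicateRow (Fin 1) v) !![d] *ᵥ
        Sum.elim y (fun _ => t) =
      Sum.elim (A *ᵥ y + t • u) (fun _ => v ⬝ᵥ y + d * t) := by
  rw [fromBlocks_mulVec]
  congr 1
  · ext i; simp [mulVec, dotProduct, mul_comm]
  · ext i; fin_cases i; simp [mulVec, dotProduct]

variable [DecidableEq m]

theorem det_fromBlocks_replicateCol_replicateRow (hA : IsUnit A.det) :
    (fromBlocks A (replicateCol (Fin 1) u) (replicateRow (Fin 1) v) !![d]).det =
      A.det * (d - v ⬝ᵥ A⁻¹ *ᵥ u) := by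
  let := A.invertibleOfIsUnitDet hA
  rw [det_fromBlocks₁₁, invOf_eq_nonsing_inv, det_fin_one, ← replicateRow_vecMul,
    Matrix.sub_apply, replicateRow_mul_replicateCol_apply, dotProduct_mulVec]
  rfl

theorem schurComplement_mul_eq_of_block_equations (hA : IsUnit A.det) {y θ : m → K} {t c : K}
    (htop : A *ᵥ y + t • u = θ) (hbot : v ⬝ᵥ y + d * t = c) :
    (d - v ⬝ᵥ A⁻¹ *ᵥ u) * t = c - v ⬝ᵥ A⁻¹ *ᵥ θ := by
  have hy : y = A⁻¹ *ᵥ θ - t • A⁻¹ *ᵥ u := by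
    rw [← htop, mulVec_add, mulVec_smul, mulVec_mulVec, nonsing_inv_mul _ hA, one_mulVec,
      add_sub_cancel_right]
  rw [← hbot, hy, dotProduct_sub, dotProduct_smul, smul_eq_mul]
  ring

end Bordered

theorem improved_answer_formula (n : ℕ) (Sn : Matrix (Fin n) (Fin n) ℝ)
    (hSn : IsUnit Sn.det)
    (k : Fin n → ℝ) (κ2 β2 : ℝ)
    (hne : β2 + (κ2 - k ⬝ᵥ Sn⁻¹ *ᵥ k) ≠ 0)
    (θn : Fin n → ℝ) (θn1 : ℝ) :
    (Sum.elim k fun _ => κ2) ⬝ᵥ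
        (Matrix.fromBlocks Sn (Matrix.replicateCol (Fin 1) k)
          (Matrix.replicateRow (Fin 1) k) !![κ2 + β2])⁻¹ *ᵥ (Sum.elim θn fun _ => θn1) =
      (β2 * (k ⬝ᵥ Sn⁻¹ *ᵥ θn) + (κ2 - k ⬝ᵥ Sn⁻¹ *ᵥ k) * θn1) /
        (β2 + (κ2 - k ⬝ᵥ Sn⁻¹ *ᵥ k)) := by
  set M := fromBlocks Sn (replicateCol (Fin 1) k) (replicateRow (Fin 1) k) !![κ2 + β2]
  have hM : IsUnit M.det := by
    rw [det_fromBlocks_replicateCol_replicateRow hSn, isUnit_iff_ne_zero]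
    refine mul_ne_zero (isUnit_iff_ne_zero.mp hSn) ?_
    rwa [add_comm κ2, add_sub_assoc]
  set x := M⁻¹ *ᵥ Sum.elim θn fun _ => θn1
  have hx : x = Sum.elim (x ∘ Sum.inl) fun _ => x (Sum.inr 0) := by
    ext (i | i)
    · rfl
    · rw [Fin.fin_one_eq_zero i]; rfl
  have hsolve : M *ᵥ x = Sum.elim θn fun _ => θn1 := by
    rw [mulVec_mulVec, mul_nonsing_inv _ hM, one_mulVec]
  rw [hx, fromBlocks_replicateCol_replicateRow_mulVec_sumElim, Sum.elim_eq_iff] at hsolve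
  obtain ⟨htop, hbot⟩ := hsolve
  have hlast := schurComplement_mul_eq_of_block_equations hSn htop (congrFun hbot 0)
  rw [hx, sumElim_dotProduct_sumElim, eq_div_iff hne, show ((fun _ => κ2) ⬝ᵥ fun _ => x (Sum.inr 0)) = κ2 * x (Sum.inr 0) from
    Fin.sum_univ_one _]
  linear_combination (β2 + (κ2 - k ⬝ᵥ Sn⁻¹ *ᵥ k)) * congrFun hbot 0 - β2 * hlast
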